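/- arXiv:math/0612035 — 2 statements merged into one kernel-verified Lean document; each statement's English description precedes it below -/
import Mathlib

section
/- Let F be strictly decreasing and positive on [0,T_h), and for T₁ < T₂ ≤ T_h define log P(t,T_i) via equation P(t,T) = exp(2M t/(2 F(T)⁻¹+A t) - 2M t/(2F(t)⁻¹+A t)). Then for all t ≤ T₁, log P(t,T₁) - log P(t,T₂) = 2M t/(2F(T₁)⁻¹+A t) - 2M t/(2F(T₂)⁻¹+A t) > 0; i.e. all nominal forward rates in the model are strictly positive. -/
open Set

/-- Positivity of all nominal forward rates. For maturities `T₁ < T₂ ≤ T_h`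
and all `t ≤ T₁`,
`log P(t,T₁) - log P(t,T₂) = 2M t/(2 F(T₁)⁻¹ + A t) - 2M t/(2 F(T₂)⁻¹ + A t) > 0`
(the terms written in the equivalent form `2 F(T) M/(2 + F(T) A)`, valid also at `F = 0`). -/
theorem stmt6 (Th : ℝ) (hTh : 0 < Th)
    (F : ℝ → ℝ) (hFanti : StrictAntiOn F (Icc 0 Th))
    (hFpos : ∀ t ∈ Ico (0:ℝ) Th, 0 < F t) (hFTh : 0 ≤ F Th)
    (M A : ℝ → ℝ) (hMpos : ∀ t, 0 ≤ t → 0 < M t) (hAnonneg : ∀ t, 0 ≤ t → 0 ≤ A t)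
    (T₁ T₂ : ℝ) (hT₁ : 0 < T₁) (h12 : T₁ < T₂) (hT₂ : T₂ ≤ Th)
    (P : ℝ → ℝ → ℝ)
    (hP : ∀ t T, P t T = Real.exp (2 * F T * M t / (2 + F T * A t)
        - 2 * F t * M t / (2 + F t * A t))) :
    ∀ t, 0 ≤ t → t ≤ T₁ →
      Real.log (P t T₁) - Real.log (P t T₂)
          = 2 * F T₁ * M t / (2 + F T₁ * A t) - 2 * F T₂ * M t / (2 + F T₂ * A t) ∧
      0 < Real.log (P t T₁) - Real.log (P t T₂) := by
  intro t ht htT₁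
  have hT₁mem : T₁ ∈ Icc 0 Th := ⟨hT₁.le, le_trans h12.le hT₂⟩
  have hT₂mem : T₂ ∈ Icc 0 Th := ⟨le_trans hT₁.le h12.le, hT₂⟩
  have hF2 : 0 ≤ F T₂ := by
    rcases eq_or_lt_of_le hT₂ with h | h
    · rw [h]; exact hFTh
    · exact (hFpos T₂ ⟨hT₂mem.1, h⟩).le
  have hF12 : F T₂ < F T₁ := hFanti hT₁mem hT₂mem h12
  have hF1 : 0 < F T₁ := lt_of_le_of_lt hF2 hF12
  have hA : 0 ≤ A t := hAnonneg t ht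
  have hM : 0 < M t := hMpos t ht
  have hd1 : 0 < 2 + F T₁ * A t := by positivity
  have hd2 : 0 < 2 + F T₂ * A t := by
    have : 0 ≤ F T₂ * A t := mul_nonneg hF2 hA
    linarith
  have heq : Real.log (P t T₁) - Real.log (P t T₂)
      = 2 * F T₁ * M t / (2 + F T₁ * A t) - 2 * F T₂ * M t / (2 + F T₂ * A t) := by
    rw [hP t T₁, hP t T₂, Real.log_exp, Real.log_exp]; ring
  refine ⟨heq, ?_⟩
  rw [heq, div_sub_div _ _ hd1.ne' hd2.ne', div_pos_iff]
  left
  constructor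
  · have : 2 * F T₁ * M t * (2 + F T₂ * A t) - (2 + F T₁ * A t) * (2 * F T₂ * M t)
        = 4 * M t * (F T₁ - F T₂) := by ring
    rw [this]
    have : 0 < F T₁ - F T₂ := by linarith
    positivity
  · positivity
end

section
/- Conversely, if for some fixed M > 0, A ≥ 0 the function T ↦ 2M/(2 F(T)⁻¹ + A) (with value 0 when F(T)=0) is absolutely continuous on [0,T_h], where F is continuous, nonnegative, and monotone decreasing, then F is absolutely continuous on [0,T_h]. -/
/-! Solving `G = 2FM/(2 + FA)` for `F` gives `F = φ ∘ G` with `φ y = 2y/(2M - Ay)`. As `F ≥ 0`,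
`A G < 2M`, so on the compact range of the continuous function `G` the denominator of `φ` stays
away from `0` and `φ` is Lipschitz there. A Lipschitz function of an absolutely continuous
function is absolutely continuous, and an absolutely continuous function is the integral of its
derivative. -/

open Set MeasureTheory

theorem LipschitzOnWith.comp_absolutelyContinuousOnInterval {X Y : Type*}
    [PseudoMetricSpace X] [PseudoMetricSpace Y] {f : ℝ → X} {φ : X → Y} {s : Set X}
    {K : NNReal} {a b : ℝ} (hφ : LipschitzOnWith K φ s)
    (hf : AbsolutelyContinuousOnInterval f a b) (hfs : MapsTo f (uIcc a b) s) :
    AbsolutelyContinuousOnInterval (φ ∘ f) a b := by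
  rw [absolutelyContinuousOnInterval_iff] at hf ⊢
  intro ε hε
  obtain ⟨δ, hδ, hfδ⟩ := hf (ε / (K + 1)) (by positivity)
  refine ⟨δ, hδ, fun E hE hEδ => ?_⟩
  calc ∑ i ∈ Finset.range E.1, dist (φ (f (E.2 i).1)) (φ (f (E.2 i).2))
      ≤ ∑ i ∈ Finset.range E.1, K * dist (f (E.2 i).1) (f (E.2 i).2) :=
        Finset.sum_le_sum fun i hi =>
          hφ.dist_le_mul _ (hfs (hE.1 i hi).1) _ (hfs (hE.1 i hi).2)
    _ = K * ∑ i ∈ Finset.range E.1, dist (f (E.2 i).1) (f (E.2 i).2) := by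
        rw [Finset.mul_sum]
    _ ≤ K * (ε / (K + 1)) := by gcongr; exact (hfδ E hE hEδ).le
    _ < (K + 1) * (ε / (K + 1)) := by gcongr; linarith
    _ = ε := by field_simp

theorem AbsolutelyContinuousOnInterval.exists_eq_add_integral {f : ℝ → ℝ} {a b : ℝ}
    (hf : AbsolutelyContinuousOnInterval f a b) :
    ∃ h : ℝ → ℝ, IntervalIntegrable h volume a b ∧
      ∀ x ∈ uIcc a b, f x = f a + ∫ u in a..x, h u := by
  refine ⟨deriv f, hf.intervalIntegrable_deriv, fun x hx => ?_⟩
  rw [(hf.mono (uIcc_subset_uIcc left_mem_uIcc hx)).integral_deriv_eq_sub]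
  ring

theorem IntervalIntegrable.absolutelyContinuousOnInterval_const_add_intervalIntegral
    {g : ℝ → ℝ} {a b : ℝ} (hg : IntervalIntegrable g volume a b) (c : ℝ) :
    AbsolutelyContinuousOnInterval (fun x => c + ∫ u in a..x, g u) a b :=
  (LipschitzWith.const c).lipschitzOnWith.absolutelyContinuousOnInterval.add
    (hg.absolutelyContinuousOnInterval_intervalIntegral left_mem_uIcc)

theorem mul_two_mul_mul_div_two_add_lt {f M A : ℝ} (hf : 0 ≤ f) (hM : 0 < M) (hA : 0 ≤ A) :
    A * (2 * f * M / (2 + f * A)) < 2 * M := by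
  have hden : 0 < 2 + f * A := by positivity
  rw [mul_div_assoc', div_lt_iff₀ hden]
  nlinarith

theorem two_mul_mul_div_two_add_leftInverse {f M A : ℝ} (hf : 0 ≤ f) (hM : 0 < M) (hA : 0 ≤ A) :
    2 * (2 * f * M / (2 + f * A)) / (2 * M - A * (2 * f * M / (2 + f * A))) = f := by
  have hden : 0 < 2 + f * A := by positivity
  have := mul_two_mul_mul_div_two_add_lt hf hM hA
  rw [div_eq_iff (by linarith)]
  field_simp
  ring

theorem exists_lipschitzOnWith_two_mul_div {M A b c : ℝ} (hA : 0 ≤ A) (hc : A * c < 2 * M) :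
    ∃ K, LipschitzOnWith K (fun y => 2 * y / (2 * M - A * y)) (Icc b c) := by
  have hden : ∀ y ∈ Icc b c, 2 * M - A * y ≠ 0 := fun y hy => by
    nlinarith [mul_le_mul_of_nonneg_left hy.2 hA]
  have : ContDiffOn ℝ 1 (fun y : ℝ => 2 * y / (2 * M - A * y)) (Icc b c) :=
    (contDiffOn_id.const_smul (2:ℝ)).div (contDiffOn_const.sub (contDiffOn_id.const_smul A)) hden
  exact this.exists_lipschitzOnWith one_ne_zero (convex_Icc b c) isCompact_Icc

theorem stmt10_general (Th : ℝ) (hTh : 0 < Th)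
    (F : ℝ → ℝ)
    (hFnonneg : ∀ t ∈ Icc (0:ℝ) Th, 0 ≤ F t)
    (M A : ℝ) (hM : 0 < M) (hA : 0 ≤ A)
    (G : ℝ → ℝ) (hG : ∀ T, G T = 2 * F T * M / (2 + F T * A))
    (hGac : ∃ g : ℝ → ℝ, IntervalIntegrable g volume 0 Th ∧
      ∀ x ∈ Icc (0:ℝ) Th, G x = G 0 + ∫ u in (0:ℝ)..x, g u) :
    ∃ h : ℝ → ℝ, IntervalIntegrable h volume 0 Th ∧
      ∀ x ∈ Icc (0:ℝ) Th, F x = F 0 + ∫ u in (0:ℝ)..x, h u := by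
  obtain ⟨g, hg, hGg⟩ := hGac
  set Φ := fun x => G 0 + ∫ u in (0:ℝ)..x, g u
  have hΦ : AbsolutelyContinuousOnInterval Φ 0 Th :=
    hg.absolutelyContinuousOnInterval_const_add_intervalIntegral (G 0)
  have hIcc : uIcc 0 Th = Icc 0 Th := uIcc_of_le hTh.le
  have hΦG : EqOn Φ G (Icc 0 Th) := fun x hx => (hGg x hx).symm
  have hFG : ∀ x ∈ Icc 0 Th, F x = 2 * G x / (2 * M - A * G x) := fun x hx => by
    rw [hG, two_mul_mul_div_two_add_leftInverse (hFnonneg x hx) hM hA]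
  obtain ⟨t₀, ht₀, hmax⟩ := isCompact_Icc.exists_isMaxOn (nonempty_Icc.2 hTh.le)
    (hIcc ▸ hΦ.continuousOn)
  obtain ⟨K, hK⟩ := exists_lipschitzOnWith_two_mul_div (b := 0) (c := G t₀) hA
    (hG t₀ ▸ mul_two_mul_mul_div_two_add_lt (hFnonneg t₀ ht₀) hM hA)
  have hΦrange : MapsTo Φ (uIcc 0 Th) (Icc 0 (G t₀)) := fun x hx => by
    rw [hIcc] at hx
    refine ⟨?_, hΦG ht₀ ▸ hmax hx⟩
    have := hFnonneg x hx
    rw [hΦG hx, hG]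
    positivity
  obtain ⟨h, hh, hFh⟩ := (hK.comp_absolutelyContinuousOnInterval hΦ hΦrange).exists_eq_add_integral
  refine ⟨h, hh, fun x hx => ?_⟩
  have h0 : (0 : ℝ) ∈ Icc 0 Th := left_mem_Icc.2 hTh.le
  rw [hFG x hx, hFG 0 h0, ← hΦG hx, ← hΦG h0]
  exact hFh x (hIcc ▸ hx)

/-- Conversely, if for some fixed `M > 0`, `A ≥ 0` the function
`G : T ↦ 2 F(T) M/(2 + F(T) A)` (the value of `2M/(2 F(T)⁻¹ + A)`, equal to `0` when
`F T = 0`) is absolutely continuous on `[0,T_h]` — i.e. the integral of an integrable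
function — where `F` is continuous, nonnegative and monotone decreasing, then `F` itself
is absolutely continuous on `[0,T_h]`. -/
theorem stmt10 (Th : ℝ) (hTh : 0 < Th)
    (F : ℝ → ℝ) (hFcont : ContinuousOn F (Icc 0 Th))
    (hFnonneg : ∀ t ∈ Icc (0:ℝ) Th, 0 ≤ F t) (hFanti : AntitoneOn F (Icc 0 Th))
    (M A : ℝ) (hM : 0 < M) (hA : 0 ≤ A)
    (G : ℝ → ℝ) (hG : ∀ T, G T = 2 * F T * M / (2 + F T * A))
    (hGac : ∃ g : ℝ → ℝ, IntervalIntegrable g volume 0 Th ∧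
      ∀ x ∈ Icc (0:ℝ) Th, G x = G 0 + ∫ u in (0:ℝ)..x, g u) :
    ∃ h : ℝ → ℝ, IntervalIntegrable h volume 0 Th ∧
      ∀ x ∈ Icc (0:ℝ) Th, F x = F 0 + ∫ u in (0:ℝ)..x, h u :=
  stmt10_general Th hTh F hFnonneg M A hM hA G hG hGac
end
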